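/- Let $G$ be a group acting on a set $X$, let $A$ be an additive abelian group, let $f : X \to A$ be a function, let $m \geq 0$, and let $g_0, g_1, \dots, g_m$ be pairwise commuting elements of $G$. Suppose that for every $x \in X$ the alternating sum $\sum_{v \in \{0,1\}^{m+1}} (-1)^{|v|} f\big(\big(\prod_{i : v_i = 1} g_i\big) \cdot x\big)$ vanishes, where $|v|$ denotes the number of coordinates of $v$ equal to $1$. Then for every choice of positive integers $k_0, k_1, \dots, k_m$ and every $x \in X$, the alternating sum $\sum_{v \in \{0,1\}^{m+1}} (-1)^{|v|} f\big(\big(\prod_{i : v_i = 1} g_i^{k_i}\big) \cdot x\big)$ also vanishes. -/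

import Mathlib

open Finset

section Aux

variable {G : Type*} [Group G] {X : Type*} [MulAction G X]
  {A : Type*} [AddCommGroup A] {m : ℕ}

private def Pfun (g : Fin (m + 1) → G) (hcomm : ∀ i j, Commute (g i) (g j))
    (a : Fin (m + 1) → ℕ) : G :=
  Finset.univ.noncommProd (fun i => g i ^ a i)
    (fun i _ j _ _ => (hcomm i j).pow_pow _ _)

private lemma Pfun_add (g : Fin (m + 1) → G) (hcomm : ∀ i j, Commute (g i) (g j))
    (a b : Fin (m + 1) → ℕ) :
    Pfun g hcomm (a + b) = Pfun g hcomm a * Pfun g hcomm b := by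
  unfold Pfun
  rw [← Finset.noncommProd_mul_distrib (fun i => g i ^ a i) (fun i => g i ^ b i)
    (fun i _ j _ _ => (hcomm i j).pow_pow _ _)
    (fun i _ j _ _ => (hcomm i j).pow_pow _ _)
    (fun i _ j _ _ => (hcomm i j).pow_pow _ _)]
  exact Finset.noncommProd_congr rfl (fun i _ => by simp [pow_add]) _

private lemma Pfun_indicator (g : Fin (m + 1) → G) (hcomm : ∀ i j, Commute (g i) (g j))
    (b : Fin (m + 1) → ℕ) (S : Finset (Fin (m + 1))) :
    Pfun g hcomm (fun i => if i ∈ S then b i else 0) =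
      S.noncommProd (fun i => g i ^ b i)
        (fun i _ j _ _ => (hcomm i j).pow_pow _ _) := by
  unfold Pfun
  beta_reduce
  have hu : (univ : Finset (Fin (m + 1))) = S ∪ Sᶜ := by simp
  rw [Finset.noncommProd_congr hu (fun x _ => rfl)
    (by intro i _ j _ _; exact (hcomm i j).pow_pow _ _)]
  refine (Finset.noncommProd_union_of_disjoint disjoint_compl_right _ _).trans ?_
  rw [Finset.noncommProd_eq_pow_card Sᶜ _ _ 1 (fun i hi => by
    rw [if_neg (by simpa using hi), pow_zero]), one_pow, mul_one]
  exact Finset.noncommProd_congr rfl (fun i hi => by rw [if_pos hi]) _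

private def Tsum (f : X → A) (g : Fin (m + 1) → G) (hcomm : ∀ i j, Commute (g i) (g j))
    (x : X) (b a : Fin (m + 1) → ℕ) : A :=
  ∑ S : Finset (Fin (m + 1)),
    ((-1 : ℤ) ^ S.card) •
      f (Pfun g hcomm (fun i => a i + if i ∈ S then b i else 0) • x)

private lemma Tsum_base (f : X → A) (g : Fin (m + 1) → G)
    (hcomm : ∀ i j, Commute (g i) (g j)) (x : X)
    (hvanish : ∀ x : X,
      ∑ S : Finset (Fin (m + 1)),
        ((-1 : ℤ) ^ S.card) •
          f ((S.noncommProd g (fun i _ j _ _ => hcomm i j)) • x) = 0)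
    (b a : Fin (m + 1) → ℕ) (hb : ∀ i, b i = 1) :
    Tsum f g hcomm x b a = 0 := by
  have h := hvanish (Pfun g hcomm a • x)
  rw [← h]
  unfold Tsum
  refine Finset.sum_congr rfl (fun S _ => ?_)
  congr 1
  have he : (fun i => a i + if i ∈ S then b i else 0)
      = (fun i => if i ∈ S then b i else 0) + a := by
    funext i; simp [add_comm]
  have hP := Finset.noncommProd_congr (rfl : S = S)
    (fun i (_ : i ∈ S) => by rw [hb i, pow_one] :
      ∀ i ∈ S, g i ^ b i = g i) (fun i _ j _ _ => (hcomm i j).pow_pow _ _)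
  rw [he, Pfun_add, Pfun_indicator, hP, mul_smul]

private lemma Tsum_step (f : X → A) (g : Fin (m + 1) → G)
    (hcomm : ∀ i j, Commute (g i) (g j)) (x : X)
    (b a : Fin (m + 1) → ℕ) (j : Fin (m + 1)) (hbj : 2 ≤ b j) :
    Tsum f g hcomm x b a =
      Tsum f g hcomm x (Function.update b j (b j - 1)) a +
      Tsum f g hcomm x (Function.update b j 1)
        (Function.update a j (a j + (b j - 1))) := by
  have split : ∀ (F : Finset (Fin (m + 1)) → A),
      ∑ S : Finset (Fin (m + 1)), F S
        = ∑ S ∈ (univ.erase j).powerset, (F S + F (insert j S)) := by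
    intro F
    have h1 := Finset.sum_powerset_insert (Finset.notMem_erase j (univ : Finset (Fin (m+1)))) F
    rw [Finset.insert_erase (mem_univ j), Finset.powerset_univ] at h1
    exact h1.trans Finset.sum_add_distrib.symm
  unfold Tsum
  rw [split, split, split, ← Finset.sum_add_distrib]
  refine Finset.sum_congr rfl (fun S hS => ?_)
  have hj : j ∉ S := fun h =>
    Finset.notMem_erase j univ ((Finset.mem_powerset.mp hS) h)
  rw [Finset.card_insert_of_notMem hj]
  -- abbreviations for the four exponent functions
  have e1 : (fun i => a i + if i ∈ S then Function.update b j (b j - 1) i else 0)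
      = (fun i => a i + if i ∈ S then b i else 0) := by
    funext i
    by_cases h : i = j
    · subst h; simp [hj]
    · simp [Function.update_of_ne h]
  have e2 : (fun i => Function.update a j (a j + (b j - 1)) i
        + if i ∈ S then Function.update b j 1 i else 0)
      = (fun i => a i + if i ∈ insert j S then Function.update b j (b j - 1) i else 0) := by
    funext i
    by_cases h : i = j
    · subst h; simp [hj]
    · simp [Function.update_of_ne h, Finset.mem_insert, h]
  have e3 : (fun i => Function.update a j (a j + (b j - 1)) i
        + if i ∈ insert j S then Function.update b j 1 i else 0)
      = (fun i => a i + if i ∈ insert j S then b i else 0) := by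
    funext i
    by_cases h : i = j
    · subst h; simp; omega
    · simp [Function.update_of_ne h]
  rw [e1, e2, e3]
  generalize f (Pfun g hcomm (fun i => a i + if i ∈ S then b i else 0) • x) = u
  generalize f (Pfun g hcomm (fun i => a i + if i ∈ insert j S then b i else 0) • x) = v
  generalize f (Pfun g hcomm
      (fun i => a i + if i ∈ insert j S then Function.update b j (b j - 1) i else 0) • x) = w
  rw [pow_succ, mul_neg_one, neg_smul, neg_smul]
  abel

private lemma Tsum_vanish (f : X → A) (g : Fin (m + 1) → G)
    (hcomm : ∀ i j, Commute (g i) (g j)) (x : X)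
    (hvanish : ∀ x : X,
      ∑ S : Finset (Fin (m + 1)),
        ((-1 : ℤ) ^ S.card) •
          f ((S.noncommProd g (fun i _ j _ _ => hcomm i j)) • x) = 0) :
    ∀ (n : ℕ) (b : Fin (m + 1) → ℕ), (∀ i, 1 ≤ b i) → (∑ i, b i) ≤ n →
      ∀ a, Tsum f g hcomm x b a = 0 := by
  intro n
  induction n with
  | zero =>
    intro b hb hsum a
    exfalso
    have : 1 ≤ ∑ i, b i :=
      le_trans (hb 0) (Finset.single_le_sum (fun i _ => Nat.zero_le _) (mem_univ 0))
    omega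
  | succ n ih =>
    intro b hb hsum a
    by_cases hb1 : ∀ i, b i = 1
    · exact Tsum_base f g hcomm x hvanish b a hb1
    · push_neg at hb1
      obtain ⟨j, hj⟩ := hb1
      have hbj : 2 ≤ b j := by have := hb j; omega
      rw [Tsum_step f g hcomm x b a j hbj]
      have hsum_erase : ∑ i, b i = b j + ∑ i ∈ univ.erase j, b i :=
        (Finset.add_sum_erase _ _ (mem_univ j)).symm
      have hc : ∑ i, Function.update b j (b j - 1) i ≤ n := by
        rw [Finset.sum_update_of_mem (mem_univ j), Finset.sdiff_singleton_eq_erase]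
        omega
      have hd : ∑ i, Function.update b j 1 i ≤ n := by
        rw [Finset.sum_update_of_mem (mem_univ j), Finset.sdiff_singleton_eq_erase]
        omega
      rw [ih _ (fun i => by
            rcases eq_or_ne i j with rfl | h
            · simp; omega
            · simpa [Function.update_of_ne h] using hb i) hc,
          ih _ (fun i => by
            rcases eq_or_ne i j with rfl | h
            · simp
            · simpa [Function.update_of_ne h] using hb i) hd,
          add_zero]

end Aux

/-- If the alternating sum of `f` over all subsets of a collection of `m + 1`
pairwise commuting group elements acting on `x` vanishes for every `x`, then the
same alternating sum with each `gᵢ` replaced by a positive power `gᵢ ^ kᵢ` also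
vanishes for every `x`. -/
theorem alternating_sum_vanishes_of_powers
    {G : Type*} [Group G] {X : Type*} [MulAction G X]
    {A : Type*} [AddCommGroup A] (f : X → A) (m : ℕ)
    (g : Fin (m + 1) → G) (hcomm : ∀ i j, Commute (g i) (g j))
    (hvanish : ∀ x : X,
      ∑ S : Finset (Fin (m + 1)),
        ((-1 : ℤ) ^ S.card) •
          f ((S.noncommProd g (fun i _ j _ _ => hcomm i j)) • x) = 0)
    (k : Fin (m + 1) → ℕ) (hk : ∀ i, 0 < k i) (x : X) :
    ∑ S : Finset (Fin (m + 1)),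
      ((-1 : ℤ) ^ S.card) •
        f ((S.noncommProd (fun i => g i ^ k i)
            (fun i _ j _ _ => (hcomm i j).pow_pow (k i) (k j))) • x) = 0 := by
  have h := Tsum_vanish f g hcomm x hvanish (∑ i, k i) k hk le_rfl (fun _ => 0)
  rw [← h]
  unfold Tsum
  refine Finset.sum_congr rfl (fun S _ => ?_)
  congr 2
  rw [show (fun i => (fun _ => 0) i + if i ∈ S then k i else 0)
      = (fun i => if i ∈ S then k i else 0) by funext i; simp,
    Pfun_indicator]
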